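/- arXiv:2002.05974 — 3 statements merged into one kernel-verified Lean document; each statement's English description precedes it below -/
import Mathlib

section
/- For every integer g ≥ 1: the number of conjugacy classes of homomorphisms from ℤ^g to A4 whose image is contained in some subgroup of A4 isomorphic to ℤ3 equals 3^g, and the number of conjugacy classes of homomorphisms from ℤ^g to A4 whose image is contained in some subgroup of A4 isomorphic to V4 equals (4^g − 4)/3 + 2. -/
/-!
A subgroup of `A4` isomorphic to `ℤ₃` or `V4` is a Sylow subgroup, hence conjugate to a fixed one
`K`. So the classes to be counted are classes of homomorphisms `ℤ^g → K`, i.e. of `g`-tuples in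
the abelian group `K` up to simultaneous conjugation by elements of `A4`.

For `K = ⟨(0 1 2)⟩`, an element conjugating a nontrivial element of `K` back into `K` lies in
`K` itself (checked in `A4`), so it fixes every tuple: there are `3 ^ g` classes.
For the normal subgroup `K = V4`, count orbits with Burnside's lemma: the 4 elements of `V4` fix
all `4 ^ g` tuples and the 8 others centralize no nontrivial element of `V4`, so they fix only the
trivial tuple. So the number `N` of classes satisfies `12 * N = 4 * 4 ^ g + 8`.
-/

/-- The conjugation equivalence on homomorphisms `Γ →* G`. -/
def homConj (Γ G : Type*) [Group Γ] [Group G] : Setoid (Γ →* G) where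
  r φ ψ := ∃ g : G, ∀ x, ψ x = g * φ x * g⁻¹
  iseqv := by
    refine ⟨fun φ => ⟨1, by simp⟩, ?_, ?_⟩
    · rintro φ ψ ⟨g, hg⟩
      exact ⟨g⁻¹, fun x => by rw [hg x]; group⟩
    · rintro φ ψ χ ⟨g, hg⟩ ⟨h, hh⟩
      exact ⟨h * g, fun x => by rw [hh x, hg x]; group⟩

/-- `ks G Γ`: number of conjugacy classes of homomorphisms `Γ →* G`. -/
noncomputable def ks (G Γ : Type*) [Group G] [Group Γ] : ℕ :=
  Nat.card (Quotient (homConj Γ G))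

/-- `ksw G Γ`: number of homomorphisms `Γ →* G`. -/
noncomputable def ksw (G Γ : Type*) [Group G] [Group Γ] : ℕ :=
  Nat.card (Γ →* G)

/-- `ksSub G H Γ`: the number of conjugacy classes of homomorphisms `Γ →* G` whose
image is contained in some subgroup of `G` isomorphic to `H`. -/
noncomputable def ksSub (G : Type*) [Group G] (H : Type*) [Group H] (Γ : Type*) [Group Γ] : ℕ :=
  Nat.card (Quotient (Setoid.comap
    (Subtype.val : {φ : Γ →* G // ∃ K : Subgroup G, Nonempty (K ≃* H) ∧ φ.range ≤ K} → (Γ →* G))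
    (homConj Γ G)))

/-- Number of conjugacy classes of homomorphisms `Γ →* G` satisfying a property `P`. -/
noncomputable def ksRestrict (G Γ : Type*) [Group G] [Group Γ] (P : (Γ →* G) → Prop) : ℕ :=
  Nat.card (Quotient (Setoid.comap
    (Subtype.val : {φ : Γ →* G // P φ} → (Γ →* G)) (homConj Γ G)))

/-- A maximal abelian subgroup. -/
def IsMaximalAbelian {G : Type*} [Group G] (K : Subgroup G) : Prop :=
  IsMulCommutative K ∧ ∀ K' : Subgroup G, IsMulCommutative K' → K ≤ K' → K' = K

abbrev A4 : Type := alternatingGroup (Fin 4)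
abbrev A5 : Type := alternatingGroup (Fin 5)
abbrev V4 : Type := Multiplicative (ZMod 2 × ZMod 2)
abbrev Z3 : Type := Multiplicative (ZMod 3)
abbrev Z5 : Type := Multiplicative (ZMod 5)
/-- The free abelian group of rank `g`, written multiplicatively. -/
abbrev Zg (g : ℕ) : Type := Multiplicative (Fin g → ℤ)

open MulAction Subgroup
open scoped IsMulCommutative

theorem Setoid.card_quotient_comap_subtype_eq {α : Type*} (r : Setoid α) {p q : α → Prop}
    (hpq : ∀ a, p a → q a) (hqp : ∀ a, q a → ∃ b, p b ∧ r a b) :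
    Nat.card (Quotient (r.comap (Subtype.val : {a // p a} → α))) =
      Nat.card (Quotient (r.comap (Subtype.val : {a // q a} → α))) := by
  refine Nat.card_congr (Equiv.ofBijective
    (Quotient.map (fun a => ⟨a.1, hpq a.1 a.2⟩) fun _ _ => id) ⟨?_, ?_⟩)
  · rintro ⟨a⟩ ⟨b⟩ h
    exact Quotient.sound (Quotient.exact (s := r.comap (Subtype.val : {a // q a} → α)) h)
  · rintro ⟨a, ha⟩
    obtain ⟨b, hb, hab⟩ := hqp a ha
    exact ⟨Quotient.mk _ ⟨b, hb⟩, Quotient.sound (r.symm hab)⟩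

theorem ksSub_eq_ksRestrict_range_le {G H Γ : Type*} [Group G] [Group H] [Group Γ]
    (K : Subgroup G) (hK : Nonempty (K ≃* H))
    (hconj : ∀ L : Subgroup G, Nonempty (L ≃* H) → ∃ t : G, ∀ x ∈ L, t * x * t⁻¹ ∈ K) :
    ksSub G H Γ = ksRestrict G Γ (·.range ≤ K) := by
  refine (Setoid.card_quotient_comap_subtype_eq _ (fun φ hφ => ⟨K, hK, hφ⟩) ?_).symm
  rintro φ ⟨L, hL, hφL⟩
  obtain ⟨t, ht⟩ := hconj L hL
  refine ⟨(MulAut.conj t).toMonoidHom.comp φ, ?_, ⟨t, fun _ => rfl⟩⟩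
  rintro _ ⟨x, rfl⟩
  exact ht _ (hφL ⟨x, rfl⟩)

theorem IsPGroup.exists_conj_mem {G : Type*} [Group G] [Finite G] {p : ℕ} [Fact p.Prime]
    {K L : Subgroup G} (hK : IsPGroup p K) (hKi : ¬ p ∣ K.index) (hL : IsPGroup p L) :
    ∃ t : G, ∀ x ∈ L, t * x * t⁻¹ ∈ K := by
  obtain ⟨Q, hLQ⟩ := hL.exists_le_sylow
  obtain ⟨t, ht⟩ := MulAction.exists_smul_eq G Q (hK.toSylow hKi)
  refine ⟨t, fun x hx => ?_⟩
  have : t * x * t⁻¹ ∈ ((t • Q : Sylow p G) : Set G) := by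
    rw [Sylow.coe_smul]
    exact Set.smul_mem_smul_set (hLQ hx)
  rwa [ht] at this

namespace Zg

variable {g : ℕ}

def single (i : Fin g) : Zg g := Multiplicative.ofAdd (Pi.single i 1)

theorem eq_prod_single (x : Zg g) : x = ∏ i, single i ^ (x.toAdd i) := by
  apply Multiplicative.toAdd.injective
  ext j
  simp [single, toAdd_prod, toAdd_zpow, Pi.single_apply]

theorem closure_range_single : Subgroup.closure (Set.range (single (g := g))) = ⊤ := by
  refine eq_top_iff.2 fun x _ => ?_
  rw [eq_prod_single x]
  exact Subgroup.prod_mem _ fun i _ =>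
    Subgroup.zpow_mem _ (Subgroup.subset_closure (Set.mem_range_self i)) _

theorem hom_ext {G : Type*} [Group G] {φ ψ : Zg g →* G}
    (h : ∀ i, φ (single i) = ψ (single i)) : φ = ψ :=
  MonoidHom.eq_of_eqOn_dense closure_range_single (by rintro _ ⟨i, rfl⟩; exact h i)

variable (g) in
def homEquivPi (K : Type*) [CommGroup K] : (Zg g →* K) ≃ (Fin g → K) :=
  ((AddMonoidHom.toMultiplicativeLeft.symm.trans (addMonoidHomLequivInt ℤ).toEquiv).trans
    (LinearEquiv.piRing ℤ (Additive K) (Fin g) ℤ).toEquiv).trans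
    (Equiv.piCongrRight fun _ => Additive.toMul)

@[simp] theorem homEquivPi_apply {K : Type*} [CommGroup K] (φ : Zg g →* K) (i : Fin g) :
    homEquivPi g K φ i = φ (single i) := rfl

theorem homConj_iff {G : Type*} [Group G] {φ ψ : Zg g →* G} :
    homConj (Zg g) G φ ψ ↔ ∃ t : G, ∀ i, ψ (single i) = t * φ (single i) * t⁻¹ := by
  refine ⟨fun ⟨t, ht⟩ => ⟨t, fun i => ht _⟩, fun ⟨t, ht⟩ => ⟨t, fun x => ?_⟩⟩
  exact DFunLike.congr_fun (hom_ext (φ := ψ) (ψ := (MulAut.conj t).toMonoidHom.comp φ) ht) x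

end Zg

namespace Subgroup

variable {G : Type*} [Group G] {ι : Type*}

variable (ι) in
def tupleConj (K : Subgroup G) : Setoid (ι → K) :=
  (orbitRel (ConjAct G) (ι → G)).comap fun f i => (f i : G)

theorem tupleConj_iff {K : Subgroup G} {f f' : ι → K} :
    K.tupleConj ι f f' ↔ ∃ t : G, ∀ i, (f' i : G) = t * f i * t⁻¹ := by
  rw [tupleConj, Setoid.comap_rel, Setoid.comm', orbitRel_apply, mem_orbit_iff]
  exact ⟨fun ⟨c, hc⟩ => ⟨ConjAct.ofConjAct c, fun i => (congrFun hc i).symm⟩,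
    fun ⟨t, ht⟩ => ⟨ConjAct.toConjAct t, funext fun i => (ht i).symm⟩⟩

theorem tupleConj_eq_bot_of_forall_conj_mem (K : Subgroup G) [IsMulCommutative K]
    (hK : ∀ t : G, ∀ k ∈ K, k ≠ 1 → t * k * t⁻¹ ∈ K → t ∈ K) : K.tupleConj ι = ⊥ := by
  ext f f'
  rw [tupleConj_iff, Setoid.bot_def]
  refine ⟨fun ⟨t, ht⟩ => (funext fun i => Subtype.ext ?_).symm, fun h => ⟨1, by simp [h]⟩⟩
  rw [ht i]
  by_cases hfi : (f i : G) = 1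
  · simp [hfi]
  · have htK : t ∈ K := hK t _ (f i).2 hfi (ht i ▸ (f' i).2)
    rw [setLike_mul_comm htK (f i).2, mul_inv_cancel_right]

theorem tupleConj_eq_orbitRel (N : Subgroup G) [N.Normal] :
    N.tupleConj ι = orbitRel (ConjAct G) (ι → N) := by
  ext f f'
  rw [tupleConj_iff, Setoid.comm', orbitRel_apply, mem_orbit_iff]
  exact ⟨fun ⟨t, ht⟩ => ⟨ConjAct.toConjAct t, funext fun i => Subtype.ext (ht i).symm⟩,
    fun ⟨c, hc⟩ => ⟨ConjAct.ofConjAct c, fun i => congrArg Subtype.val (congrFun hc i).symm⟩⟩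

end Subgroup

theorem ksRestrict_range_le_eq_card_quotient_tupleConj (G : Type*) [Group G] (K : Subgroup G)
    [IsMulCommutative K] (g : ℕ) :
    ksRestrict G (Zg g) (·.range ≤ K) = Nat.card (Quotient (K.tupleConj (Fin g))) := by
  let e : {φ : Zg g →* G // φ.range ≤ K} ≃ (Fin g → K) :=
    { toFun := fun φ i => ⟨φ.1 (Zg.single i), φ.2 ⟨_, rfl⟩⟩
      invFun := fun f => ⟨K.subtype.comp ((Zg.homEquivPi g K).symm f),
        by rintro _ ⟨x, rfl⟩; exact ((Zg.homEquivPi g K).symm f x).2⟩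
      left_inv := fun φ => Subtype.ext <| Zg.hom_ext fun i => by
        simp [← Zg.homEquivPi_apply]
      right_inv := fun f => funext fun i => by simp [← Zg.homEquivPi_apply] }
  refine Nat.card_congr (Quotient.congr e fun φ ψ => ?_)
  rw [Setoid.comap_rel, Zg.homConj_iff, Subgroup.tupleConj_iff]
  rfl

section

variable {G : Type*} [Group G] {N : Subgroup G} [N.Normal] {ι : Type*}

theorem fixedBy_conjAct_pi_eq_univ [IsMulCommutative N] {t : G} (ht : t ∈ N) :
    fixedBy (ι → N) (ConjAct.toConjAct t) = Set.univ :=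
  Set.eq_univ_of_forall fun f => funext fun i => Subtype.ext <| by
    show t * f i * t⁻¹ = f i
    rw [setLike_mul_comm ht (f i).2, mul_inv_cancel_right]

theorem fixedBy_conjAct_pi_eq_one {t : G} (ht : ∀ n ∈ N, t * n = n * t → n = 1) :
    fixedBy (ι → N) (ConjAct.toConjAct t) = {1} := by
  refine Set.eq_singleton_iff_unique_mem.2 ⟨smul_one _, fun f hf => funext fun i => ?_⟩
  have hfi : t * f i * t⁻¹ = f i := congrArg Subtype.val (congrFun hf i)
  exact Subtype.ext (ht _ (f i).2 (mul_inv_eq_iff_eq_mul.1 hfi))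

theorem card_quotient_orbitRel_conjAct_pi_mul_card [IsMulCommutative N] [Finite G] [Finite ι]
    (hN : ∀ t ∉ N, ∀ n ∈ N, t * n = n * t → n = 1) :
    Nat.card (Quotient (orbitRel (ConjAct G) (ι → N))) * Nat.card G =
      Nat.card N * Nat.card N ^ Nat.card ι + (Nat.card G - Nat.card N) := by
  classical
  have := Fintype.ofFinite G
  have := Fintype.ofFinite ι
  have hfix : ∀ t : G, Fintype.card (fixedBy (ι → N) (ConjAct.toConjAct t)) =
      if t ∈ N then Nat.card N ^ Nat.card ι else 1 := by
    intro t
    rw [← Nat.card_eq_fintype_card]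
    split_ifs with ht
    · rw [fixedBy_conjAct_pi_eq_univ ht, Nat.card_univ, Nat.card_fun]
    · rw [fixedBy_conjAct_pi_eq_one (hN t ht), Nat.card_unique]
  have hB := MulAction.sum_card_fixedBy_eq_card_orbits_mul_card_group (ConjAct G) (ι → N)
  rw [ConjAct.card, ← Fintype.sum_equiv ConjAct.toConjAct.toEquiv _ _ fun t => (hfix t).symm,
    Finset.sum_ite, Finset.sum_const, Finset.sum_const] at hB
  have hcard := Finset.card_filter_add_card_filter_not (s := Finset.univ) (p := (· ∈ N))
  rw [← Fintype.card_subtype, Finset.card_univ] at hcard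
  simp only [smul_eq_mul, mul_one, ← Fintype.card_subtype, ← Nat.card_eq_fintype_card] at hB hcard
  rw [show Nat.card G - Nat.card N = Nat.card {t // t ∉ N} by omega]
  exact hB.symm

end

namespace A4

open alternatingGroup

theorem card : Nat.card A4 = 12 := card_of_card_eq_four (by simp)

def threeCycle : A4 :=
  ⟨Equiv.swap 0 1 * Equiv.swap 1 2, Equiv.Perm.mem_alternatingGroup.2 (by decide)⟩

theorem orderOf_threeCycle : orderOf threeCycle = 3 := orderOf_eq_prime (by decide) (by decide)

theorem card_zpowers_threeCycle : Nat.card (zpowers threeCycle) = 3 :=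
  (Nat.card_zpowers _).trans orderOf_threeCycle

theorem mem_zpowers_threeCycle_of_conj_mem :
    ∀ t : A4, ∀ k ∈ zpowers threeCycle, k ≠ 1 → t * k * t⁻¹ ∈ zpowers threeCycle →
      t ∈ zpowers threeCycle := by
  simp only [mem_zpowers_iff_mem_range_orderOf, orderOf_threeCycle]
  decide

theorem nonempty_zpowers_threeCycle_mulEquiv : Nonempty (zpowers threeCycle ≃* Z3) :=
  ⟨mulEquivOfPrimeCardEq card_zpowers_threeCycle (by simp)⟩

theorem exists_conj_mem_zpowers_threeCycle (L : Subgroup A4) (hL : Nonempty (L ≃* Z3)) :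
    ∃ t : A4, ∀ x ∈ L, t * x * t⁻¹ ∈ zpowers threeCycle := by
  refine IsPGroup.exists_conj_mem (p := 3) (IsPGroup.of_card (n := 1) card_zpowers_threeCycle)
    ?_ (IsPGroup.of_card (n := 1) ((Nat.card_congr hL.some.toEquiv).trans (by simp)))
  have := (zpowers threeCycle).card_mul_index
  rw [card_zpowers_threeCycle, card] at this
  omega

instance : IsKleinFour (kleinFour (Fin 4)) := kleinFour_isKleinFour (by simp)

instance : IsMulCommutative (kleinFour (Fin 4)) := IsKleinFour.isMulCommutative

instance : (kleinFour (Fin 4)).Normal := normal_kleinFour (by simp)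

theorem card_kleinFour : Nat.card (kleinFour (Fin 4)) = 4 := IsKleinFour.card_four

theorem mem_kleinFour_iff {x : A4} : x ∈ kleinFour (Fin 4) ↔ x * x = 1 := by
  refine ⟨fun hx => congrArg Subtype.val (IsKleinFour.mul_self (⟨x, hx⟩ : kleinFour (Fin 4))),
    fun hx => ?_⟩
  rcases eq_or_ne x 1 with rfl | hx1
  · exact one_mem _
  have hcard : Nat.card (zpowers x) = 2 ^ 1 := by
    rw [Nat.card_zpowers, pow_one]
    exact orderOf_eq_prime (by rw [sq, hx]) hx1
  obtain ⟨S, hS⟩ := (IsPGroup.of_card hcard).exists_le_sylow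
  rw [← two_sylow_eq_kleinFour_of_card_eq_four (by simp) S]
  exact hS (mem_zpowers x)

theorem eq_one_of_mem_kleinFour_of_commute :
    ∀ t ∉ kleinFour (Fin 4), ∀ n ∈ kleinFour (Fin 4), t * n = n * t → n = 1 := by
  simp only [mem_kleinFour_iff]
  decide

theorem nonempty_kleinFour_mulEquiv : Nonempty (kleinFour (Fin 4) ≃* V4) :=
  IsKleinFour.nonempty_mulEquiv

theorem exists_conj_mem_kleinFour (L : Subgroup A4) (hL : Nonempty (L ≃* V4)) :
    ∃ t : A4, ∀ x ∈ L, t * x * t⁻¹ ∈ kleinFour (Fin 4) := by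
  refine IsPGroup.exists_conj_mem (p := 2) (IsPGroup.of_card (n := 2) card_kleinFour)
    ?_ (IsPGroup.of_card (n := 2) ((Nat.card_congr hL.some.toEquiv).trans (by simp)))
  have := (kleinFour (Fin 4)).card_mul_index
  rw [card_kleinFour, card] at this
  omega

end A4

theorem ksSub_A4_Z3 (g : ℕ) : ksSub A4 Z3 (Zg g) = 3 ^ g := by
  rw [ksSub_eq_ksRestrict_range_le _ A4.nonempty_zpowers_threeCycle_mulEquiv
      A4.exists_conj_mem_zpowers_threeCycle, ksRestrict_range_le_eq_card_quotient_tupleConj,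
    Subgroup.tupleConj_eq_bot_of_forall_conj_mem _ A4.mem_zpowers_threeCycle_of_conj_mem,
    Nat.card_congr Setoid.quotientBotEquiv, Nat.card_fun, A4.card_zpowers_threeCycle, Nat.card_fin]

theorem three_mul_ksSub_A4_V4 (g : ℕ) : 3 * ksSub A4 V4 (Zg g) = 4 ^ g + 2 := by
  have h :=
    card_quotient_orbitRel_conjAct_pi_mul_card (ι := Fin g) A4.eq_one_of_mem_kleinFour_of_commute
  rw [A4.card, A4.card_kleinFour, Nat.card_fin] at h
  rw [ksSub_eq_ksRestrict_range_le _ A4.nonempty_kleinFour_mulEquiv A4.exists_conj_mem_kleinFour,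
    ksRestrict_range_le_eq_card_quotient_tupleConj, Subgroup.tupleConj_eq_orbitRel]
  omega

theorem statement_6_general (g : ℕ) :
    ksSub A4 Z3 (Zg g) = 3 ^ g ∧
    (ksSub A4 V4 (Zg g) : ℚ) = ((4 : ℚ) ^ g - 4) / 3 + 2 := by
  refine ⟨ksSub_A4_Z3 g, ?_⟩
  have h : (3 * ksSub A4 V4 (Zg g) : ℚ) = 4 ^ g + 2 := mod_cast three_mul_ksSub_A4_V4 g
  linarith

theorem statement_6 (g : ℕ) (hg : 1 ≤ g) :
    ksSub A4 Z3 (Zg g) = 3 ^ g ∧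
    (ksSub A4 V4 (Zg g) : ℚ) = ((4 : ℚ) ^ g - 4) / 3 + 2 :=
  statement_6_general g
end

section
/- Let Γ be a group generated by two elements whose abelianization is infinite cyclic. Then every non-surjective homomorphism Γ → A4 has abelian image, the number of conjugacy classes of non-surjective homomorphisms Γ → A4 equals 4, and the number of conjugacy classes of surjective homomorphisms Γ → A4 is 0 or 2. -/
/-!
Any two non-commuting elements of `A4` generate it: subgroups of order at most 4 are commutative,
and a subgroup of order 6 would have index 2, hence contain all squares, hence every 3-cycle `c`
(as `c = (c²)²`), and the 3-cycles generate `A4`. So a homomorphism `Γ → A4` is non-surjective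
exactly when its image is commutative. Such a homomorphism factors through `Γᵃᵇ ≅ ℤ`, so it is
determined by one element of `A4`, compatibly with conjugation: this gives the 4 conjugacy
classes of `A4`.

For two surjections, the composites `Γ → A4 → A4ᵃᵇ ≅ ℤ/3` both factor through `Γᵃᵇ ≅ ℤ`, so the
images of the generators give proportional vectors in `(ℤ/3)²`. A finite check shows that two
generating pairs of `A4` with proportional images differ by an automorphism of `A4`, i.e. by
conjugation in `S4`. Hence if there is a surjection `φ`, every surjection is conjugate to `φ` or
to `φ` followed by conjugation with the transposition `(0 1)`, and these two are not conjugate.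
-/

theorem alternatingGroup.index_ne_two {α : Type*} [Fintype α] [DecidableEq α]
    (H : Subgroup (alternatingGroup α)) : H.index ≠ 2 := by
  intro h
  have hH : H = ⊤ := by
    rw [eq_top_iff, ← alternatingGroup.closure_isThreeCycles_eq_top, Subgroup.closure_le]
    intro c hc
    have hc3 : c ^ 3 = 1 := Subtype.ext (by
      simpa [Equiv.Perm.IsThreeCycle.orderOf hc] using pow_orderOf_eq_one (c : Equiv.Perm α))
    have hc_sq : c = (c * c) * (c * c) := by
      calc c = c ^ 3 * c := by rw [hc3, one_mul]
        _ = (c * c) * (c * c) := by simp only [pow_succ, pow_zero, one_mul, mul_assoc]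
    rw [SetLike.mem_coe, hc_sq]
    exact H.mul_self_mem_of_index_two h _
  rw [hH, Subgroup.index_top] at h
  omega

namespace A4

theorem exists_not_commute : ∃ x y : A4, ¬Commute x y := by
  unfold Commute SemiconjBy
  decide

theorem card_conjClasses : Nat.card (ConjClasses A4) = 4 := by
  rw [Nat.card_eq_fintype_card]
  decide

theorem closure_pair_eq_top_of_not_commute {s t : A4} (hst : ¬Commute s t) :
    Subgroup.closure {s, t} = ⊤ := by
  set H := Subgroup.closure ({s, t} : Set A4)
  have hH : ¬IsMulCommutative H := fun hc => hst <| congrArg Subtype.val <|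
    hc.is_comm.comm ⟨s, Subgroup.subset_closure (by simp)⟩ ⟨t, Subgroup.subset_closure (by simp)⟩
  have hcard : Nat.card A4 = 12 := by
    rw [Nat.card_eq_fintype_card]
    decide
  have hdiv : Nat.card H ∈ Nat.divisors 12 :=
    Nat.mem_divisors.2 ⟨hcard ▸ Subgroup.card_subgroup_dvd_card H, by norm_num⟩
  rw [show Nat.divisors 12 = {1, 2, 3, 4, 6, 12} from rfl] at hdiv
  simp only [Finset.mem_insert, Finset.mem_singleton] at hdiv
  rcases hdiv with h | h | h | h | h | h
  · exact absurd (isCyclic_of_card_dvd_prime (p := 2) (by simp [h])).isMulCommutative hH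
  · exact absurd (isCyclic_of_card_dvd_prime (p := 2) (by simp [h])).isMulCommutative hH
  · exact absurd (isCyclic_of_card_dvd_prime (p := 3) (by simp [h])).isMulCommutative hH
  · exact absurd (IsPGroup.isMulCommutative_of_card_eq_prime_sq (p := 2) h) hH
  · refine absurd ?_ (alternatingGroup.index_ne_two H)
    have := H.card_mul_index
    rw [h, hcard] at this
    omega
  · exact Subgroup.eq_top_of_card_eq H (h.trans hcard.symm)

/-- An element of `A4` is determined by `(x 0, x 1)`; the table lists its image under the
abelianization `A4 → A4 ⧸ V4 ≅ ℤ/3`. -/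
def toZMod3Fun (x : A4) : ZMod 3 :=
  match x.val 0, x.val 1 with
  | 0, 1 => 0 | 0, 2 => 2 | 0, 3 => 1
  | 1, 0 => 0 | 1, 2 => 1 | 1, 3 => 2
  | 2, 0 => 2 | 2, 1 => 1 | 2, 3 => 0
  | 3, 0 => 1 | 3, 1 => 2 | 3, 2 => 0
  | _, _ => 0

def toZMod3 : A4 →* Multiplicative (ZMod 3) where
  toFun x := .ofAdd (toZMod3Fun x)
  map_one' := by decide
  map_mul' := by decide

def swapConj : MulAut A4 := MulAut.conjNormal (Equiv.swap 0 1 : Equiv.Perm (Fin 4))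

theorem swapConj_not_inner : ∀ g : A4, ∃ x : A4, swapConj x ≠ g * x * g⁻¹ := by
  decide

/- `Aut A4 = S4` acts freely on the 96 generating pairs of `A4`, with 4 orbits; these are told
apart by the line in `(ℤ/3)²` spanned by the image of the pair. -/
set_option maxRecDepth 10000 in
theorem exists_conj_of_cross_mul_eq : ∀ s₁ s₂ t₁ t₂ : A4, ¬Commute s₁ s₂ → ¬Commute t₁ t₂ →
    (toZMod3 s₁).toAdd * (toZMod3 t₂).toAdd = (toZMod3 s₂).toAdd * (toZMod3 t₁).toAdd →
    ∃ g : A4, (t₁ = g * s₁ * g⁻¹ ∧ t₂ = g * s₂ * g⁻¹) ∨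
      (t₁ = g * swapConj s₁ * g⁻¹ ∧ t₂ = g * swapConj s₂ * g⁻¹) := by
  unfold Commute SemiconjBy
  decide

end A4

section CyclicAbelianization

variable {Γ G : Type*} [Group Γ] [Group G]

theorem commutator_le_ker_of_commute (f : Γ →* G) (hf : ∀ x y, Commute (f x) (f y)) :
    commutator Γ ≤ f.ker := by
  rw [commutator_eq_closure, Subgroup.closure_le]
  rintro _ ⟨x, y, rfl⟩
  rw [SetLike.mem_coe, MonoidHom.mem_ker, map_commutatorElement,
    commutatorElement_eq_one_iff_commute]
  exact hf x y

theorem map_eq_zpow_of_commute (e : Abelianization Γ ≃* Multiplicative ℤ) {x₀ : Γ}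
    (hx₀ : e (Abelianization.of x₀) = .ofAdd 1) (f : Γ →* G) (hf : ∀ x y, Commute (f x) (f y))
    (x : Γ) : f x = f x₀ ^ (e (Abelianization.of x)).toAdd := by
  set f' : Abelianization Γ →* G :=
    QuotientGroup.lift _ f (commutator_le_ker_of_commute f hf)
  have hf' : ∀ y, f' (Abelianization.of y) = f y := fun _ => rfl
  have hx₀' : e.symm (.ofAdd 1) = Abelianization.of x₀ := by rw [← hx₀, MulEquiv.symm_apply_apply]
  have hext : f'.comp e.symm.toMonoidHom = zpowersHom G (f x₀) :=
    MonoidHom.ext_mint (by simp [hx₀', hf'])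
  calc f x = (f'.comp e.symm.toMonoidHom) (e (Abelianization.of x)) := by simp [hf']
    _ = f x₀ ^ (e (Abelianization.of x)).toAdd := by rw [hext]; rfl

theorem exists_abelianization_eq_ofAdd_one (e : Abelianization Γ ≃* Multiplicative ℤ) :
    ∃ x₀ : Γ, e (Abelianization.of x₀) = .ofAdd 1 :=
  (e.surjective.comp QuotientGroup.mk_surjective) _

def commutingHomEquiv (e : Abelianization Γ ≃* Multiplicative ℤ) {x₀ : Γ}
    (hx₀ : e (Abelianization.of x₀) = .ofAdd 1) :
    {φ : Γ →* G // ∀ x y, Commute (φ x) (φ y)} ≃ G where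
  toFun φ := φ.1 x₀
  invFun c := ⟨(zpowersHom G c).comp (e.toMonoidHom.comp Abelianization.of),
    fun _ _ => Commute.zpow_zpow_self c _ _⟩
  left_inv φ := Subtype.ext <| MonoidHom.ext fun x =>
    (map_eq_zpow_of_commute e hx₀ φ.1 φ.2 x).symm
  right_inv c := by
    change c ^ (e (Abelianization.of x₀)).toAdd = c
    rw [hx₀, toAdd_ofAdd, zpow_one]

theorem ksRestrict_commute_eq_card_conjClasses (e : Abelianization Γ ≃* Multiplicative ℤ) :
    ksRestrict G Γ (fun φ => ∀ x y, Commute (φ x) (φ y)) = Nat.card (ConjClasses G) := by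
  obtain ⟨x₀, hx₀⟩ := exists_abelianization_eq_ofAdd_one e
  refine Nat.card_congr (Quotient.congr (commutingHomEquiv e hx₀) fun φ ψ => ?_)
  change homConj Γ G φ ψ ↔ IsConj (φ.1 x₀) (ψ.1 x₀)
  rw [isConj_iff]
  constructor
  · rintro ⟨g, hg⟩
    exact ⟨g, (hg x₀).symm⟩
  · rintro ⟨g, hg⟩
    refine ⟨g, fun x => ?_⟩
    rw [map_eq_zpow_of_commute e hx₀ ψ.1 ψ.2, map_eq_zpow_of_commute e hx₀ φ.1 φ.2, ← hg,
      conj_zpow]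

theorem toAdd_cross_mul_eq {R : Type*} [CommRing R] (e : Abelianization Γ ≃* Multiplicative ℤ)
    (f g : Γ →* Multiplicative R) (a b : Γ) :
    (f a).toAdd * (g b).toAdd = (f b).toAdd * (g a).toAdd := by
  obtain ⟨x₀, hx₀⟩ := exists_abelianization_eq_ofAdd_one e
  have hscale : ∀ (h : Γ →* Multiplicative R) (y : Γ),
      (h y).toAdd = (e (Abelianization.of y)).toAdd • (h x₀).toAdd := fun h y => by
    rw [map_eq_zpow_of_commute e hx₀ h (fun _ _ => Commute.all _ _) y, toAdd_zpow]
  rw [hscale f a, hscale f b, hscale g a, hscale g b]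
  simp only [zsmul_eq_mul]
  ring

end CyclicAbelianization

section KsRestrict

variable {Γ G : Type*} [Group Γ] [Group G] {P : (Γ →* G) → Prop}

theorem ksRestrict_congr {Q : (Γ →* G) → Prop} (h : ∀ φ, P φ ↔ Q φ) :
    ksRestrict G Γ P = ksRestrict G Γ Q := by
  rw [show P = Q from funext fun φ => propext (h φ)]

theorem ksRestrict_eq_zero (h : ∀ φ, ¬P φ) : ksRestrict G Γ P = 0 := by
  have : IsEmpty {φ // P φ} := ⟨fun φ => h φ.1 φ.2⟩
  exact Nat.card_of_isEmpty

theorem ksRestrict_eq_two {φ₁ φ₂ : Γ →* G} (h₁ : P φ₁) (h₂ : P φ₂)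
    (hne : ¬homConj Γ G φ₁ φ₂) (hcover : ∀ ψ, P ψ → homConj Γ G φ₁ ψ ∨ homConj Γ G φ₂ ψ) :
    ksRestrict G Γ P = 2 := by
  rw [ksRestrict, Nat.card_eq_two_iff]
  refine ⟨⟦⟨φ₁, h₁⟩⟧, ⟦⟨φ₂, h₂⟩⟧, fun h => hne (Quotient.exact (s := Setoid.comap Subtype.val (homConj Γ G)) h), Set.eq_univ_of_forall ?_⟩
  rintro ⟨ψ, hψ⟩
  rcases hcover ψ hψ with h | h
  · exact .inl (Quotient.sound ((homConj Γ G).symm' h))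
  · exact .inr (Quotient.sound ((homConj Γ G).symm' h))

end KsRestrict

section TwoGenerated

variable {Γ G : Type*} [Group Γ] [Group G] {a b : Γ}

theorem MonoidHom.range_eq_closure_pair (hgen : Subgroup.closure {a, b} = (⊤ : Subgroup Γ))
    (φ : Γ →* G) : φ.range = Subgroup.closure {φ a, φ b} := by
  rw [MonoidHom.range_eq_map, ← hgen, MonoidHom.map_closure, Set.image_pair]

theorem MonoidHom.commute_of_commute_pair (hgen : Subgroup.closure {a, b} = (⊤ : Subgroup Γ))
    (φ : Γ →* G) (hab : Commute (φ a) (φ b)) (x y : Γ) : Commute (φ x) (φ y) := by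
  have hcomm := Subgroup.isMulCommutative_closure (k := {φ a, φ b}) <| by
    rintro _ (rfl | rfl) _ (rfl | rfl)
    exacts [rfl, hab.eq, hab.eq.symm, rfl]
  have hmem : ∀ z, φ z ∈ Subgroup.closure {φ a, φ b} := fun z =>
    φ.range_eq_closure_pair hgen ▸ ⟨z, rfl⟩
  exact congrArg Subtype.val (hcomm.is_comm.comm ⟨φ x, hmem x⟩ ⟨φ y, hmem y⟩)

theorem homConj_of_eqOn_pair (hgen : Subgroup.closure {a, b} = (⊤ : Subgroup Γ))
    {φ ψ : Γ →* G} (g : G) (ha : ψ a = g * φ a * g⁻¹) (hb : ψ b = g * φ b * g⁻¹) :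
    homConj Γ G φ ψ := by
  have h : ψ = (MulAut.conj g).toMonoidHom.comp φ :=
    MonoidHom.eq_of_eqOn_dense hgen <| by rintro _ (rfl | rfl) <;> assumption
  exact ⟨g, fun x => DFunLike.congr_fun h x⟩

end TwoGenerated

section TwoGeneratedToA4

variable {Γ : Type*} [Group Γ] {a b : Γ}

theorem not_surjective_iff_commute (hgen : Subgroup.closure {a, b} = (⊤ : Subgroup Γ))
    (φ : Γ →* A4) : ¬Function.Surjective φ ↔ ∀ x y, Commute (φ x) (φ y) := by
  constructor
  · intro hφ
    refine φ.commute_of_commute_pair hgen (not_not.1 fun hab => hφ ?_)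
    rw [← MonoidHom.range_eq_top, φ.range_eq_closure_pair hgen]
    exact A4.closure_pair_eq_top_of_not_commute hab
  · rintro hcomm hφ
    obtain ⟨s, t, hst⟩ := A4.exists_not_commute
    obtain ⟨x, rfl⟩ := hφ s
    obtain ⟨y, rfl⟩ := hφ t
    exact hst (hcomm x y)

theorem homConj_or_homConj_swapConj_of_surjective
    (hgen : Subgroup.closure {a, b} = (⊤ : Subgroup Γ)) (e : Abelianization Γ ≃* Multiplicative ℤ)
    {φ ψ : Γ →* A4} (hφ : Function.Surjective φ) (hψ : Function.Surjective ψ) :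
    homConj Γ A4 φ ψ ∨ homConj Γ A4 (A4.swapConj.toMonoidHom.comp φ) ψ := by
  have hnc : ∀ χ : Γ →* A4, Function.Surjective χ → ¬Commute (χ a) (χ b) := fun χ hχ hab =>
    (not_surjective_iff_commute hgen χ).2 (χ.commute_of_commute_pair hgen hab) hχ
  obtain ⟨g, ⟨ha, hb⟩ | ⟨ha, hb⟩⟩ := A4.exists_conj_of_cross_mul_eq _ _ _ _ (hnc φ hφ) (hnc ψ hψ)
    (toAdd_cross_mul_eq e (A4.toZMod3.comp φ) (A4.toZMod3.comp ψ) a b)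
  · exact .inl (homConj_of_eqOn_pair hgen g ha hb)
  · exact .inr (homConj_of_eqOn_pair hgen g ha hb)

theorem ksRestrict_surjective_eq_two (hgen : Subgroup.closure {a, b} = (⊤ : Subgroup Γ))
    (e : Abelianization Γ ≃* Multiplicative ℤ) {φ : Γ →* A4} (hφ : Function.Surjective φ) :
    ksRestrict A4 Γ (fun ψ => Function.Surjective ψ) = 2 := by
  refine ksRestrict_eq_two hφ (A4.swapConj.surjective.comp hφ) ?_
    fun ψ hψ => homConj_or_homConj_swapConj_of_surjective hgen e hφ hψ
  rintro ⟨g, hg⟩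
  obtain ⟨c, hc⟩ := A4.swapConj_not_inner g
  obtain ⟨x, rfl⟩ := hφ c
  exact hc (hg x)

end TwoGeneratedToA4

theorem statement_11 (Γ : Type*) [Group Γ]
    (hgen : ∃ a b : Γ, Subgroup.closure {a, b} = (⊤ : Subgroup Γ))
    (hab : Nonempty (Abelianization Γ ≃* Multiplicative ℤ)) :
    (∀ φ : Γ →* A4, ¬Function.Surjective φ → ∀ x y : Γ, φ x * φ y = φ y * φ x) ∧
    ksRestrict A4 Γ (fun φ => ¬Function.Surjective φ) = 4 ∧
    (ksRestrict A4 Γ (fun φ => Function.Surjective φ) = 0 ∨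
      ksRestrict A4 Γ (fun φ => Function.Surjective φ) = 2) := by
  obtain ⟨a, b, hgen⟩ := hgen
  obtain ⟨e⟩ := hab
  have hns := not_surjective_iff_commute hgen
  refine ⟨fun φ hφ => (hns φ).1 hφ, ?_, ?_⟩
  · rw [ksRestrict_congr hns, ksRestrict_commute_eq_card_conjClasses e, A4.card_conjClasses]
  · by_cases h : ∃ φ : Γ →* A4, Function.Surjective φ
    · exact .inr (ksRestrict_surjective_eq_two hgen e h.choose_spec)
    · exact .inl (ksRestrict_eq_zero fun φ hφ => h ⟨φ, hφ⟩)
end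

section
/- Let g ≥ 1 and let Γ' be a finitely generated group whose abelianization is a free abelian group of rank g − 1. Then ks_{A4}(ℤ * Γ') = 12·ks_{A4}(Γ') − 6·3^{g−1} − 2·4^{g−1}; in particular, 12 divides ks_{A4}(ℤ * Γ') + 6·3^{g−1} + 2·4^{g−1}. -/
/-!
Burnside's lemma for the conjugation action of `A4` on `Hom(Γ, A4)`: a homomorphism is fixed by
conjugation with `g` iff it lands in the centralizer `C(g)`, so `12 · ks(Γ) = ∑_g |Hom(Γ, C(g))|`.
For `g ≠ 1` the centralizer is abelian (`V4` for the three double transpositions, `ℤ/3` for the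
eight 3-cycles), hence `|Hom(Γ', C(g))| = |C(g)|^(g-1)` only depends on the abelianization, while
`Hom(ℤ ∗ Γ', C) = C × Hom(Γ', C)`. Comparing the Burnside sums for `Γ'` and `ℤ ∗ Γ'` eliminates
the unknown `|Hom(Γ', A4)|`.
-/

open MulAction Subgroup

section ConjugationAction

variable {Γ G : Type*} [Group Γ] [Group G]

instance : MulAction (ConjAct G) (Γ →* G) where
  smul u φ :=
    { toFun x := u • φ x
      map_one' := by simp
      map_mul' x y := by simp [smul_mul'] }
  one_smul φ := MonoidHom.ext fun x => one_smul _ (φ x)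
  mul_smul u v φ := MonoidHom.ext fun x => mul_smul u v (φ x)

theorem ConjAct.smul_monoidHom_apply (u : ConjAct G) (φ : Γ →* G) (x : Γ) :
    (u • φ) x = u • φ x := rfl

theorem homConj_eq_orbitRel : homConj Γ G = orbitRel (ConjAct G) (Γ →* G) := by
  ext φ ψ
  refine ⟨fun ⟨g, hg⟩ => ⟨ConjAct.toConjAct g⁻¹, MonoidHom.ext fun x => ?_⟩,
    fun ⟨u, hu⟩ => ⟨(ConjAct.ofConjAct u)⁻¹, fun x => ?_⟩⟩
  · rw [ConjAct.smul_monoidHom_apply, ConjAct.toConjAct_smul, hg]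
    group
  · rw [← hu, ConjAct.smul_monoidHom_apply, ConjAct.smul_def]
    group

theorem mem_fixedBy_toConjAct_iff (g : G) (φ : Γ →* G) :
    φ ∈ fixedBy (Γ →* G) (ConjAct.toConjAct g) ↔ ∀ x, φ x ∈ centralizer {g} := by
  simp only [mem_fixedBy, DFunLike.ext_iff, ConjAct.smul_monoidHom_apply,
    ConjAct.toConjAct_smul, mul_inv_eq_iff_eq_mul, mem_centralizer_singleton_iff]
  exact forall_congr' fun x => eq_comm

def fixedByEquivMonoidHomCentralizer (g : G) :
    fixedBy (Γ →* G) (ConjAct.toConjAct g) ≃ (Γ →* centralizer {g}) where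
  toFun φ := (φ : Γ →* G).codRestrict _ ((mem_fixedBy_toConjAct_iff g _).mp φ.2)
  invFun ψ := ⟨(centralizer {g}).subtype.comp ψ,
    (mem_fixedBy_toConjAct_iff g _).mpr fun x => (ψ x).2⟩
  left_inv _ := rfl
  right_inv _ := rfl

theorem centralizer_singleton_one : centralizer {(1 : G)} = ⊤ :=
  centralizer_eq_top_iff_subset.mpr (Set.singleton_subset_iff.mpr (one_mem _))

theorem card_centralizer_singleton [Fintype G] [DecidableEq G] (g : G) :
    Nat.card (centralizer {g}) = (Finset.univ.filter fun k : G => k * g = g * k).card := by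
  rw [← Nat.card_eq_finsetCard]
  congr
  ext
  simp [mem_centralizer_singleton_iff]

theorem ks_mul_card [Fintype G] [Finite (Γ →* G)] :
    ks G Γ * Nat.card G = ∑ g : G, Nat.card (Γ →* centralizer {g}) := by
  rw [ks, homConj_eq_orbitRel, Nat.card_congr (ConjAct.toConjAct (G := G)).toEquiv,
    ← Nat.card_prod, ← Nat.card_congr (sigmaFixedByEquivOrbitsProdGroup (ConjAct G) _),
    Nat.card_sigma]
  exact (Fintype.sum_equiv (ConjAct.toConjAct (G := G)).toEquiv _ _ fun g =>
    Nat.card_congr (fixedByEquivMonoidHomCentralizer g).symm).symm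

end ConjugationAction

section CountingHomomorphisms

variable {Γ H : Type*} [Group Γ] [Group H]

theorem finite_monoidHom_of_fg [Finite H] (hΓ : Group.FG Γ) : Finite (Γ →* H) := by
  obtain ⟨S, hS, hSfin⟩ := Group.fg_iff.mp hΓ
  have := hSfin.to_subtype
  refine Finite.of_injective (fun φ : Γ →* H => fun s : S => φ s) fun φ ψ hφψ => ?_
  exact MonoidHom.eq_of_eqOn_dense hS fun s hs => congrFun hφψ ⟨s, hs⟩

noncomputable def monoidHomCoprodIntEquiv :
    (Monoid.Coprod (Multiplicative ℤ) Γ →* H) ≃ H × (Γ →* H) :=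
  Monoid.Coprod.liftEquiv.symm.trans ((zpowersHom H).symm.prodCongr (Equiv.refl _))

theorem card_monoidHom_coprod_int :
    Nat.card (Monoid.Coprod (Multiplicative ℤ) Γ →* H) = Nat.card H * Nat.card (Γ →* H) := by
  rw [Nat.card_congr monoidHomCoprodIntEquiv, Nat.card_prod]

theorem card_monoidHom_of_abelianization_mulEquiv {K : Type*} [CommGroup K] {n : ℕ}
    (e : Abelianization Γ ≃* Zg n) : Nat.card (Γ →* K) = Nat.card K ^ n := by
  have E : (Γ →* K) ≃ (Fin n → Additive K) :=
    Abelianization.lift.trans <| e.monoidHomCongrLeftEquiv.trans <|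
      MonoidHom.toAdditiveRight.trans <| (addMonoidHomLequivInt ℤ).toEquiv.trans <|
        (LinearEquiv.piRing ℤ (Additive K) (Fin n) ℤ).toEquiv
  rw [Nat.card_congr E, Nat.card_fun, Nat.card_fin, Nat.card_congr Additive.toMul]

end CountingHomomorphisms

theorem card_A4 : Nat.card A4 = 12 := by
  rw [Nat.card_eq_fintype_card]
  decide

theorem isMulCommutative_centralizer_A4 {g : A4} (hg : g ≠ 1) :
    IsMulCommutative (centralizer {g}) := by
  have hcomm : ∀ g : A4, g ≠ 1 → ∀ h k : A4, h * g = g * h → k * g = g * k → h * k = k * h := by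
    decide
  exact ⟨⟨fun h k => Subtype.ext <| hcomm g hg h k (mem_centralizer_singleton_iff.mp h.2)
    (mem_centralizer_singleton_iff.mp k.2)⟩⟩

/-- The three double transpositions have centralizer `V4`, the eight 3-cycles have centralizer
`ℤ/3`. -/
theorem sum_erase_one_card_centralizer_A4 (f : ℕ → ℕ) :
    ∑ g ∈ Finset.univ.erase (1 : A4), f (Nat.card (centralizer {g})) = 3 * f 4 + 8 * f 3 := by
  have hcards : (Finset.univ.erase (1 : A4)).val.map
      (fun g => (Finset.univ.filter fun k : A4 => k * g = g * k).card) =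
      Multiset.replicate 3 4 + Multiset.replicate 8 3 := by
    decide
  have := congrArg (fun m => (m.map f).sum) hcards
  simp only [Multiset.map_map, Function.comp_def, Multiset.map_add, Multiset.map_replicate,
    Multiset.sum_add, Multiset.sum_replicate, smul_eq_mul] at this
  simpa only [card_centralizer_singleton, Finset.sum_eq_multiset_sum] using this

theorem sum_card_centralizer_pow_mul_card_monoidHom_A4 {Γ : Type*} [Group Γ] {n : ℕ}
    (e : Abelianization Γ ≃* Zg n) (k : ℕ) :
    ∑ g : A4, Nat.card (centralizer {g}) ^ k * Nat.card (Γ →* centralizer {g}) =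
      12 ^ k * ksw A4 Γ + (3 * 4 ^ (k + n) + 8 * 3 ^ (k + n)) := by
  rw [← Finset.add_sum_erase _ _ (Finset.mem_univ 1),
    ← sum_erase_one_card_centralizer_A4 (· ^ (k + n))]
  congr 1
  · rw [centralizer_singleton_one, Nat.card_congr (MulEquiv.monoidHomCongrRightEquiv topEquiv),
      Nat.card_congr topEquiv.toEquiv, card_A4, ksw]
  · refine Finset.sum_congr rfl fun g hg => ?_
    have := isMulCommutative_centralizer_A4 (Finset.ne_of_mem_erase hg)
    open scoped IsMulCommutative in
    rw [card_monoidHom_of_abelianization_mulEquiv e, pow_add]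

theorem statement_16_general (g : ℕ) (Γ' : Type*) [Group Γ'] (hΓ' : Group.FG Γ')
    (hab : Nonempty (Abelianization Γ' ≃* Zg (g - 1))) :
    (ks A4 (Monoid.Coprod (Multiplicative ℤ) Γ') : ℤ) =
        12 * (ks A4 Γ' : ℤ) - 6 * 3 ^ (g - 1) - 2 * 4 ^ (g - 1) ∧
    (12 : ℤ) ∣ (ks A4 (Monoid.Coprod (Multiplicative ℤ) Γ') : ℤ)
        + 6 * 3 ^ (g - 1) + 2 * 4 ^ (g - 1) := by
  obtain ⟨e⟩ := hab
  have := finite_monoidHom_of_fg (H := A4) hΓ'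
  have := Finite.of_equiv _ (monoidHomCoprodIntEquiv (Γ := Γ') (H := A4)).symm
  set n := g - 1
  have hΓ : ks A4 Γ' * 12 = ksw A4 Γ' + (3 * 4 ^ n + 8 * 3 ^ n) := by
    rw [← card_A4, ks_mul_card]
    simpa using sum_card_centralizer_pow_mul_card_monoidHom_A4 e 0
  have hZΓ : ks A4 (Monoid.Coprod (Multiplicative ℤ) Γ') * 12 =
      12 * ksw A4 Γ' + (3 * 4 ^ (1 + n) + 8 * 3 ^ (1 + n)) := by
    rw [← card_A4, ks_mul_card, card_A4]
    simpa [card_monoidHom_coprod_int] using sum_card_centralizer_pow_mul_card_monoidHom_A4 e 1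
  have hks : (ks A4 (Monoid.Coprod (Multiplicative ℤ) Γ') : ℤ) =
      12 * (ks A4 Γ' : ℤ) - 6 * 3 ^ n - 2 * 4 ^ n := by
    rw [pow_add, pow_add, pow_one, pow_one] at hZΓ
    zify at hΓ hZΓ
    linarith
  exact ⟨hks, hks ▸ ⟨ks A4 Γ', by ring⟩⟩

theorem statement_16 (g : ℕ) (hg : 1 ≤ g) (Γ' : Type*) [Group Γ'] (hΓ' : Group.FG Γ')
    (hab : Nonempty (Abelianization Γ' ≃* Zg (g - 1))) :
    (ks A4 (Monoid.Coprod (Multiplicative ℤ) Γ') : ℤ) =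
        12 * (ks A4 Γ' : ℤ) - 6 * 3 ^ (g - 1) - 2 * 4 ^ (g - 1) ∧
    (12 : ℤ) ∣ (ks A4 (Monoid.Coprod (Multiplicative ℤ) Γ') : ℤ)
        + 6 * 3 ^ (g - 1) + 2 * 4 ^ (g - 1) :=
  statement_16_general g Γ' hΓ' hab
end
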